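/- arXiv:2004.05692 — 2 statements merged into one kernel-verified Lean document; each statement's English description precedes it below -/
import Mathlib

section
/- Fix an integer N ≥ 2, a real R > 0, and a real d with 0 ≤ d ≤ 2R. Then F_N(√(4R² − d²)) = 1 − F_N(d). (The antipodal map x ↦ −x carries the set of chords of length ≤ √(4R² − d²) from a fixed point onto the set of chords of length ≥ d, and chord-length level sets are σ-null, so strict versus non-strict inequalities are immaterial.) -/
/-!
The map `(x, y) ↦ (x, -y)` preserves `σ ⊗ σ`, and for `x, y` on the sphere the parallelogram law
`‖x + y‖² + ‖x - y‖² = 4R²` turns `‖x + y‖ ≤ √(4R² - d²)` into `d ≤ ‖x - y‖`; so everything rests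
on the level sets `{‖x - y‖ = d}` being null. For `x` on the sphere, `{y ∈ S : ‖x - y‖ = d}` lies in
the hyperplane `⟪x, y⟫ = R² - d²/2`.

Proper affine subspaces are null for every isometry-invariant s-finite measure on a space of
dimension `≥ 2` without an atom at `0`, by downward induction on the codimension. Turn one unit
normal of the subspace towards a unit vector orthogonal to all its normals by an angle `θ ∈ (0, π)`:
this gives uncountably many isometric copies, any two of which meet inside a subspace of higher
codimension, hence in a null set. An s-finite measure has only countably many pairwise a.e.-disjoint
sets of positive measure, so the copies are null. In full codimension the copies of a point `p ≠ 0`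
are distinct points.
-/

open Function MeasureTheory Module Real Set
open scoped RealInnerProductSpace

theorem Real.uncountable_Ioo {a b : ℝ} (h : a < b) : Uncountable (Ioo a b) := by
  rw [← not_countable_iff, countable_coe_iff, Cardinal.Real.Ioo_countable_iff, not_le]
  exact h

theorem Real.eq_zero_of_cos_mul_add_sin_mul_eq_zero {θ θ' a b : ℝ} (hθ : θ ∈ Ioo 0 π)
    (hθ' : θ' ∈ Ioo 0 π) (hne : θ ≠ θ') (h : cos θ * a + sin θ * b = 0)
    (h' : cos θ' * a + sin θ' * b = 0) : a = 0 ∧ b = 0 := by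
  have hsin : sin (θ' - θ) ≠ 0 := by
    rw [Ne, sin_eq_zero_iff_of_lt_of_lt (by linarith [hθ.2, hθ'.1]) (by linarith [hθ.1, hθ'.2])]
    exact sub_ne_zero.2 hne.symm
  rw [sin_sub] at hsin
  constructor
  · refine (mul_eq_zero.1 ?_).resolve_left hsin
    linear_combination sin θ' * h - sin θ * h'
  · refine (mul_eq_zero.1 ?_).resolve_left hsin
    linear_combination cos θ * h' - cos θ' * h

theorem MeasureTheory.measure_eq_zero_of_uncountable_aedisjoint {α ι : Type*} [MeasurableSpace α]
    {μ : Measure α} [SFinite μ] [Uncountable ι] {s : Set α} {A : ι → Set α}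
    (hA : ∀ i, NullMeasurableSet (A i) μ) (hdisj : Pairwise (AEDisjoint μ on A))
    (hμA : ∀ i, μ (A i) = μ s) : μ s = 0 := by
  by_contra hs
  apply not_countable_univ (α := ι)
  convert Measure.countable_meas_pos_of_disjoint_iUnion₀ hA hdisj
  simp [hμA, pos_iff_ne_zero, hs]

section InnerProductSpace

variable {E : Type*} [NormedAddCommGroup E] [InnerProductSpace ℝ E]

theorem norm_cos_smul_add_sin_smul {u w : E} (hu : ‖u‖ = 1) (hw : ‖w‖ = 1) (huw : ⟪u, w⟫ = 0)
    (θ : ℝ) : ‖cos θ • u + sin θ • w‖ = 1 := by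
  have h := norm_add_sq_eq_norm_sq_add_norm_sq_real
    (by rw [real_inner_smul_left, real_inner_smul_right, huw, mul_zero, mul_zero] :
      ⟪cos θ • u, sin θ • w⟫ = 0)
  rw [norm_smul, norm_smul, hu, hw, norm_eq_abs, norm_eq_abs] at h
  have h1 : ‖cos θ • u + sin θ • w‖ ^ 2 = 1 := by
    nlinarith [abs_mul_abs_self (cos θ), abs_mul_abs_self (sin θ), sin_sq_add_cos_sq θ]
  exact (pow_eq_one_iff_of_nonneg (norm_nonneg _) two_ne_zero).1 h1

theorem exists_linearIsometryEquiv_apply_eq_of_norm_eq {u v : E} (h : ‖u‖ = ‖v‖) :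
    ∃ O : E ≃ₗᵢ[ℝ] E, O u = v ∧ ∀ x, ⟪u, x⟫ = 0 → ⟪v, x⟫ = 0 → O x = x :=
  ⟨(ℝ ∙ (u - v))ᗮ.reflection, Submodule.reflection_sub h, fun x hu hv =>
    Submodule.reflection_mem_subspace_eq_self <|
      Submodule.mem_orthogonal_singleton_iff_inner_right.2 <| by
        rw [inner_sub_left, hu, hv, sub_zero]⟩

theorem exists_norm_eq_one_mem_orthogonal [FiniteDimensional ℝ E] {K : Submodule ℝ E}
    (hK : finrank ℝ K < finrank ℝ E) : ∃ w ∈ Kᗮ, ‖w‖ = 1 := by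
  have hK' : Kᗮ ≠ ⊥ := by
    rw [Ne, Submodule.orthogonal_eq_bot_iff]
    rintro rfl
    simp at hK
  obtain ⟨v, hv, hv0⟩ := Submodule.exists_mem_ne_zero_of_ne_bot hK'
  exact ⟨(‖v‖⁻¹ : ℝ) • v, Kᗮ.smul_mem _ hv, norm_smul_inv_norm hv0⟩

theorem Orthonormal.snoc {k : ℕ} {f : Fin k → E} (hf : Orthonormal ℝ f) {w : E} (hw : ‖w‖ = 1)
    (hfw : ∀ i, ⟪f i, w⟫ = 0) : Orthonormal ℝ (Fin.snoc f w : Fin (k + 1) → E) := by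
  rw [orthonormal_iff_ite] at hf ⊢
  intro i j
  induction i using Fin.lastCases <;> induction j using Fin.lastCases <;>
    simp [hf, hfw, real_inner_comm _ w, hw, Fin.castSucc_ne_last,
      (Fin.castSucc_ne_last _).symm]

def innerLevelSet {ι : Type*} (f : ι → E) (t : ι → ℝ) : Set E := {y | ∀ i, ⟪f i, y⟫ = t i}

theorem isClosed_innerLevelSet {ι : Type*} (f : ι → E) (t : ι → ℝ) :
    IsClosed (innerLevelSet f t) := by
  simp only [innerLevelSet, ofPred_forall]
  exact isClosed_iInter fun i => isClosed_eq (continuous_const.inner continuous_id) continuous_const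

theorem image_innerLevelSet {ι : Type*} (O : E ≃ₗᵢ[ℝ] E) (f : ι → E) (t : ι → ℝ) :
    O '' innerLevelSet f t = innerLevelSet (O ∘ f) t := by
  ext y
  simp [O.image_eq_preimage_symm, innerLevelSet, O.inner_map_eq_flip]

theorem innerLevelSet_subsingleton [FiniteDimensional ℝ E] {k : ℕ} {f : Fin k → E}
    (hf : Orthonormal ℝ f) (hk : k = finrank ℝ E) (t : Fin k → ℝ) :
    (innerLevelSet f t).Subsingleton := by
  intro y hy y' hy'
  rcases k.eq_zero_or_pos with rfl | hk0
  · have : Subsingleton E := finrank_zero_iff.1 hk.symm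
    exact Subsingleton.elim y y'
  have : Nonempty (Fin k) := ⟨⟨0, hk0⟩⟩
  let b := basisOfOrthonormalOfCardEqFinrank hf (by simpa using hk)
  exact InnerProductSpace.ext_inner_left_basis b fun i => by
    simp only [b, coe_basisOfOrthonormalOfCardEqFinrank, hy i, hy' i]

theorem exists_linearIsometryEquiv_comp_eq_update {k : ℕ} {f : Fin k → E} (hf : Orthonormal ℝ f)
    {w : E} (hw : ‖w‖ = 1) (hfw : ∀ i, ⟪f i, w⟫ = 0) (i₀ : Fin k) (θ : ℝ) :
    ∃ O : E ≃ₗᵢ[ℝ] E, O ∘ f = update f i₀ (cos θ • f i₀ + sin θ • w) := by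
  obtain ⟨O, hO, hOfix⟩ := exists_linearIsometryEquiv_apply_eq_of_norm_eq
    (by rw [norm_cos_smul_add_sin_smul (hf.1 i₀) hw (hfw i₀), hf.1 i₀] :
      ‖f i₀‖ = ‖cos θ • f i₀ + sin θ • w‖)
  refine ⟨O, funext fun i => ?_⟩
  rcases eq_or_ne i i₀ with rfl | hi
  · simp [hO]
  · rw [comp_apply, update_of_ne hi]
    refine hOfix _ (by rw [real_inner_comm]; exact hf.2 hi) ?_
    rw [inner_add_left, real_inner_smul_left, real_inner_smul_left, hf.2 hi.symm,
      real_inner_comm (f i) w, hfw, mul_zero, mul_zero, add_zero]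

-- The constraints at two angles `θ ≠ θ'` in `(0, π)` determine both `⟪f i₀, y⟫` and `⟪w, y⟫`.
theorem innerLevelSet_update_inter_subset {k : ℕ} (f : Fin k → E) (w : E) (i₀ : Fin k)
    (t : Fin k → ℝ) {θ θ' : ℝ} (hθ : θ ∈ Ioo 0 π) (hθ' : θ' ∈ Ioo 0 π) (hne : θ ≠ θ') {y₀ : E}
    (hy₀ : y₀ ∈ innerLevelSet (update f i₀ (cos θ • f i₀ + sin θ • w)) t ∩
      innerLevelSet (update f i₀ (cos θ' • f i₀ + sin θ' • w)) t) :
    innerLevelSet (update f i₀ (cos θ • f i₀ + sin θ • w)) t ∩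
        innerLevelSet (update f i₀ (cos θ' • f i₀ + sin θ' • w)) t ⊆
      innerLevelSet (Fin.snoc f w : Fin (k + 1) → E)
        (fun j => ⟪(Fin.snoc f w : Fin (k + 1) → E) j, y₀⟫) := by
  rintro y ⟨hy, hy'⟩
  have hperp : ∀ {g : Fin k → E}, y ∈ innerLevelSet g t → y₀ ∈ innerLevelSet g t →
      ∀ i, ⟪g i, y - y₀⟫ = 0 := fun hy hy₀ i => by rw [inner_sub_right, hy i, hy₀ i, sub_self]
  have h₀ := Real.eq_zero_of_cos_mul_add_sin_mul_eq_zero hθ hθ' hne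
    (by simpa [inner_add_left, real_inner_smul_left] using hperp hy hy₀.1 i₀)
    (by simpa [inner_add_left, real_inner_smul_left] using hperp hy' hy₀.2 i₀)
  intro j
  rw [← sub_eq_zero, ← inner_sub_right]
  induction j using Fin.lastCases with
  | last => simpa using h₀.2
  | cast i =>
    rw [Fin.snoc_castSucc]
    rcases eq_or_ne i i₀ with rfl | hi
    · exact h₀.1
    · simpa [hi] using hperp hy hy₀.1 i

end InnerProductSpace

section IsometryInvariant

variable {E : Type*} [NormedAddCommGroup E] [InnerProductSpace ℝ E] [MeasurableSpace E]
  [BorelSpace E] {μ : Measure E}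

theorem measure_image_linearIsometryEquiv (hμ : ∀ O : E ≃ₗᵢ[ℝ] E, μ.map O = μ)
    (O : E ≃ₗᵢ[ℝ] E) {s : Set E} (hs : MeasurableSet s) : μ (O '' s) = μ s := by
  rw [O.image_eq_preimage_symm, ← Measure.map_apply O.symm.continuous.measurable hs, hμ]

variable [FiniteDimensional ℝ E] [SFinite μ]

theorem measure_singleton_eq_zero_of_isometry_invariant (hE : 2 ≤ finrank ℝ E)
    (hμ : ∀ O : E ≃ₗᵢ[ℝ] E, μ.map O = μ) (h0 : μ {0} = 0) (p : E) : μ {p} = 0 := by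
  rcases eq_or_ne p 0 with rfl | hp
  · exact h0
  obtain ⟨w, hw, hw1⟩ := exists_norm_eq_one_mem_orthogonal (K := ℝ ∙ p)
    (by rw [finrank_span_singleton hp]; omega)
  set u := (‖p‖⁻¹ : ℝ) • p
  have hu : ‖u‖ = 1 := norm_smul_inv_norm hp
  have huw : ⟪u, w⟫ = 0 := by
    rw [real_inner_smul_left, Submodule.mem_orthogonal_singleton_iff_inner_right.1 hw, mul_zero]
  -- the points `‖p‖ • (cos θ • u + sin θ • w)`, `θ ∈ (0, π)`, are distinct isometric images of `p`
  have hq : ∀ θ, ‖p‖ = ‖‖p‖ • (cos θ • u + sin θ • w)‖ := fun θ => by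
    rw [norm_smul, norm_cos_smul_add_sin_smul hu hw1 huw, norm_norm, mul_one]
  choose O hO using fun θ : Ioo 0 π => exists_linearIsometryEquiv_apply_eq_of_norm_eq (hq θ)
  have := Real.uncountable_Ioo pi_pos
  refine measure_eq_zero_of_uncountable_aedisjoint (A := fun θ => {O θ p})
    (fun θ => (measurableSet_singleton _).nullMeasurableSet) ?_ fun θ => by
      rw [← image_singleton, measure_image_linearIsometryEquiv hμ _ (measurableSet_singleton p)]
  intro θ θ' hne
  refine Disjoint.aedisjoint ?_
  simp only [hO, disjoint_singleton, Ne]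
  intro heq
  have hcos := congrArg (fun x => ⟪u, x⟫) heq
  simp only [inner_smul_right, inner_add_right, real_inner_self_eq_norm_sq, hu, huw] at hcos
  exact hne <| Subtype.ext <| injOn_cos (Ioo_subset_Icc_self θ.2) (Ioo_subset_Icc_self θ'.2) <| by
    simpa [norm_ne_zero_iff.2 hp] using hcos

theorem measure_innerLevelSet_eq_zero_of_isometry_invariant (hE : 2 ≤ finrank ℝ E)
    (hμ : ∀ O : E ≃ₗᵢ[ℝ] E, μ.map O = μ) (h0 : μ {0} = 0) {k : ℕ} (hk : 0 < k) {f : Fin k → E}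
    (hf : Orthonormal ℝ f) (t : Fin k → ℝ) : μ (innerLevelSet f t) = 0 := by
  obtain ⟨m, hm⟩ : ∃ m, k + m = finrank ℝ E :=
    ⟨_, Nat.add_sub_of_le (by simpa using hf.linearIndependent.fintype_card_le_finrank)⟩
  induction m generalizing k with
  | zero =>
    obtain h | ⟨p, hp⟩ := (innerLevelSet_subsingleton hf (by omega) t).eq_empty_or_singleton
    · rw [h, measure_empty]
    · rw [hp]
      exact measure_singleton_eq_zero_of_isometry_invariant hE hμ h0 p
  | succ m ih =>
    obtain ⟨w, hw, hw1⟩ := exists_norm_eq_one_mem_orthogonal (K := Submodule.span ℝ (range f))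
      ((finrank_range_le_card f).trans_lt (by simp; omega))
    have hfw : ∀ i, ⟪f i, w⟫ = 0 := fun i =>
      Submodule.inner_right_of_mem_orthogonal (Submodule.subset_span (mem_range_self i)) hw
    set i₀ : Fin k := ⟨0, hk⟩
    set A := fun θ : Ioo 0 π => innerLevelSet (update f i₀ (cos θ • f i₀ + sin θ • w)) t
    have := Real.uncountable_Ioo pi_pos
    refine measure_eq_zero_of_uncountable_aedisjoint (A := A)
      (fun θ => (isClosed_innerLevelSet _ t).measurableSet.nullMeasurableSet)
      (fun θ θ' hne => ?_) (fun θ => ?_)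
    · show μ (A θ ∩ A θ') = 0
      obtain h | ⟨y₀, hy₀⟩ := (A θ ∩ A θ').eq_empty_or_nonempty
      · rw [h, measure_empty]
      exact measure_mono_null
        (innerLevelSet_update_inter_subset f w i₀ t θ.2 θ'.2 (Subtype.coe_ne_coe.2 hne) hy₀)
        (ih k.succ_pos (hf.snoc hw1 hfw) _ (by omega))
    · obtain ⟨O, hO⟩ := exists_linearIsometryEquiv_comp_eq_update hf hw1 hfw i₀ θ
      simp only [A]
      rw [← hO, ← image_innerLevelSet,
        measure_image_linearIsometryEquiv hμ _ (isClosed_innerLevelSet f t).measurableSet]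

theorem measure_setOf_inner_eq_eq_zero_of_isometry_invariant (hE : 2 ≤ finrank ℝ E)
    (hμ : ∀ O : E ≃ₗᵢ[ℝ] E, μ.map O = μ) (h0 : μ {0} = 0) {x : E} (hx : x ≠ 0) (r : ℝ) :
    μ {y | ⟪x, y⟫ = r} = 0 := by
  convert measure_innerLevelSet_eq_zero_of_isometry_invariant hE hμ h0 Nat.one_pos
    (f := fun _ => (‖x‖⁻¹ : ℝ) • x)
    ⟨fun _ => norm_smul_inv_norm hx, fun i j h => (h (Subsingleton.elim i j)).elim⟩
    (fun _ => ‖x‖⁻¹ * r) using 2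
  ext y
  simp [innerLevelSet, real_inner_smul_left, norm_ne_zero_iff.2 hx]

end IsometryInvariant

section Sphere

variable {E : Type*} [NormedAddCommGroup E] [InnerProductSpace ℝ E]

theorem norm_add_le_sqrt_iff_le_norm_sub {x y : E} {R d : ℝ} (hx : ‖x‖ = R) (hy : ‖y‖ = R)
    (hd0 : 0 ≤ d) (hd : d ≤ 2 * R) : ‖x + y‖ ≤ √(4 * R ^ 2 - d ^ 2) ↔ d ≤ ‖x - y‖ := by
  have hpar := parallelogram_law_with_norm ℝ x y
  rw [hx, hy] at hpar
  rw [Real.le_sqrt (norm_nonneg _) (by nlinarith), ← sq_le_sq₀ hd0 (norm_nonneg _)]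
  constructor <;> intro h <;> linarith

variable [FiniteDimensional ℝ E] [MeasurableSpace E] [BorelSpace E]

theorem measure_prod_dist_eq_eq_zero {σ : Measure E} [SFinite σ] (hE : 2 ≤ finrank ℝ E) {R : ℝ}
    (hR : 0 < R) (hsupp : σ (Metric.sphere 0 R)ᶜ = 0) (hσ : ∀ O : E ≃ₗᵢ[ℝ] E, σ.map O = σ)
    (d : ℝ) : (σ.prod σ) {q | dist q.1 q.2 = d} = 0 := by
  have h0 : σ {0} = 0 := measure_mono_null (by simp [hR.ne]) hsupp
  rw [Measure.measure_prod_null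
    (isClosed_eq (continuous_fst.dist continuous_snd) continuous_const).measurableSet]
  filter_upwards [mem_ae_iff.2 hsupp] with x hx
  rw [mem_sphere_zero_iff_norm] at hx
  have hx0 : x ≠ 0 := by rintro rfl; simp [hR.ne] at hx
  -- on the sphere, `dist x y = d` cuts out the hyperplane `⟪x, y⟫ = R ^ 2 - d ^ 2 / 2`
  refine measure_mono_null (fun y (hy : dist x y = d) => ?_) (measure_union_null hsupp
    (measure_setOf_inner_eq_eq_zero_of_isometry_invariant hE hσ h0 hx0 (R ^ 2 - d ^ 2 / 2)))
  by_cases hyR : ‖y‖ = R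
  · right
    have := norm_sub_sq_real x y
    rw [← dist_eq_norm, hy, hx, hyR] at this
    simp only [mem_ofPred_eq]
    linarith
  · left
    simpa using hyR

end Sphere

theorem stmt_3 (N : ℕ) (hN : 2 ≤ N) (R : ℝ) (hR : 0 < R)
    (σ : Measure (EuclideanSpace ℝ (Fin N))) [IsProbabilityMeasure σ]
    (hsupp : σ (Metric.sphere (0 : EuclideanSpace ℝ (Fin N)) R)ᶜ = 0)
    (hinv : ∀ O : EuclideanSpace ℝ (Fin N) ≃ₗᵢ[ℝ] EuclideanSpace ℝ (Fin N),
      Measure.map O σ = σ)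
    (d : ℝ) (hd0 : 0 ≤ d) (hd : d ≤ 2 * R) :
    ((σ.prod σ)
        {q : EuclideanSpace ℝ (Fin N) × EuclideanSpace ℝ (Fin N) |
          dist q.1 q.2 ≤ Real.sqrt (4 * R ^ 2 - d ^ 2)}).toReal
      = 1 - ((σ.prod σ)
        {q : EuclideanSpace ℝ (Fin N) × EuclideanSpace ℝ (Fin N) | dist q.1 q.2 ≤ d}).toReal := by
  have hE : 2 ≤ finrank ℝ (EuclideanSpace ℝ (Fin N)) := by rwa [finrank_euclideanSpace_fin]
  have hdist : ∀ r, MeasurableSet {q : EuclideanSpace ℝ (Fin N) × EuclideanSpace ℝ (Fin N) |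
      dist q.1 q.2 ≤ r} := fun r =>
    (isClosed_le (continuous_fst.dist continuous_snd) continuous_const).measurableSet
  have hneg : MeasurePreserving (Prod.map id (LinearIsometryEquiv.neg ℝ)) (σ.prod σ) (σ.prod σ) :=
    (MeasurePreserving.id σ).prod ⟨(LinearIsometryEquiv.neg ℝ).continuous.measurable, hinv _⟩
  have hS : ∀ᵐ x ∂σ, x ∈ Metric.sphere 0 R := mem_ae_iff.2 hsupp
  have hanti : (σ.prod σ) {q | dist q.1 q.2 ≤ √(4 * R ^ 2 - d ^ 2)} =
      (σ.prod σ) {q | dist q.1 q.2 ≤ d}ᶜ := by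
    rw [← hneg.measure_preimage (hdist _).nullMeasurableSet]
    refine measure_congr (Filter.eventuallyEq_set.2 ?_)
    filter_upwards [Measure.quasiMeasurePreserving_fst.ae hS,
      Measure.quasiMeasurePreserving_snd.ae hS, measure_eq_zero_iff_ae_notMem.1
        (measure_prod_dist_eq_eq_zero hE hR hsupp hinv d)] with q h1 h2 hq
    simp only [mem_sphere_zero_iff_norm] at h1 h2
    simp only [mem_preimage, mem_ofPred_eq, mem_compl_iff, Prod.map_fst, Prod.map_snd, id_eq,
      LinearIsometryEquiv.coe_neg, dist_eq_norm, sub_neg_eq_add] at hq ⊢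
    rw [norm_add_le_sqrt_iff_le_norm_sub h1 h2 hd0 hd, not_le]
    exact (Ne.symm hq).le_iff_lt
  rw [hanti, prob_compl_eq_one_sub (hdist d),
    ENNReal.toReal_sub_of_le prob_le_one ENNReal.one_ne_top, ENNReal.toReal_one]
end

section
/- Fix an integer N ≥ 2 and a real R > 0. For every d with 0 ≤ d ≤ √2·R, the hyper-hemisphere chord length CDF dominates the hypersphere chord length CDF: F_{NH}(d) ≥ F_N(d). -/
/-!
Replacing the last coordinate `x_l` by `|x_l|` folds the sphere onto the hemisphere without
increasing distances, and by the reflection invariance of `σ` it pushes `σ` forward to at most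
`2 • σ.restrict {x_l ≥ 0}`. Once the equator is known to be `σ`-null, the latter is exactly the
hemisphere measure, so `σ ⊗ σ` of `{dist ≤ d}` is at most that of its preimage under the fold,
which is at most the hemisphere measure of `{dist ≤ d}`.

The equator is null by induction on the coordinate subspaces `A k = {x | x_j = 0 for j ≥ k}`:
rotating `A (k+1)` in the `(k, k+1)`-plane by the angles `θ ∈ (0, π)` gives uncountably many
sets of measure `σ (A (k+1))` that pairwise meet inside `A k`, so `σ (A (k+1)) ≤ σ (A k)`,
while `A 0 = {0}` is null because `σ` lives on the sphere of radius `R > 0`.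
-/
open MeasureTheory

/-- The hemisphere: points of the sphere of radius `R` in `ℝ^N` with nonnegative
last coordinate. -/
def hemiset (N : ℕ) (hN : 2 ≤ N) (R : ℝ) : Set (EuclideanSpace ℝ (Fin N)) :=
  {x | ‖x‖ = R ∧ 0 ≤ x ⟨N - 1, by omega⟩}

/-- The uniform probability measure on the hemisphere: the restriction of `σ` to the
hemisphere, normalized to a probability measure. -/
noncomputable def hemiMeasure (N : ℕ) (hN : 2 ≤ N) (R : ℝ)
    (σ : Measure (EuclideanSpace ℝ (Fin N))) : Measure (EuclideanSpace ℝ (Fin N)) :=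
  (σ (hemiset N hN R))⁻¹ • σ.restrict (hemiset N hN R)

section Coordinates

variable {ι : Type*} [DecidableEq ι]

noncomputable def coordReflection [Fintype ι] (l : ι) :
    EuclideanSpace ℝ ι ≃ₗᵢ[ℝ] EuclideanSpace ℝ ι :=
  LinearIsometryEquiv.piLpCongrRight 2
    (Function.update (fun _ => LinearIsometryEquiv.refl ℝ ℝ) l (LinearIsometryEquiv.neg ℝ))

lemma coordReflection_apply [Fintype ι] (l : ι) (x : EuclideanSpace ℝ ι) (j : ι) :
    coordReflection l x j = if j = l then -x j else x j := by
  by_cases h : j = l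
  · subst h; simp [coordReflection]
  · simp [coordReflection, h]

noncomputable def coordAbs (l : ι) (x : EuclideanSpace ℝ ι) : EuclideanSpace ℝ ι :=
  WithLp.toLp 2 fun j => if j = l then |x j| else x j

lemma coordAbs_of_nonneg {l : ι} {x : EuclideanSpace ℝ ι} (hx : 0 ≤ x l) :
    coordAbs l x = x := by
  ext j
  by_cases h : j = l
  · subst h; simp [coordAbs, abs_of_nonneg hx]
  · simp [coordAbs, h]

lemma coordAbs_of_nonpos [Fintype ι] {l : ι} {x : EuclideanSpace ℝ ι} (hx : x l ≤ 0) :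
    coordAbs l x = coordReflection l x := by
  ext j
  by_cases h : j = l
  · subst h; simp [coordAbs, coordReflection_apply, abs_of_nonpos hx]
  · simp [coordAbs, coordReflection_apply, h]

lemma continuous_coordAbs [Fintype ι] (l : ι) :
    Continuous (coordAbs l : EuclideanSpace ℝ ι → _) :=
  (PiLp.continuous_toLp 2 _).comp <| continuous_pi fun j => by split_ifs <;> fun_prop

lemma dist_coordAbs_le [Fintype ι] (l : ι) (x y : EuclideanSpace ℝ ι) :
    dist (coordAbs l x) (coordAbs l y) ≤ dist x y := by
  rw [EuclideanSpace.dist_eq, EuclideanSpace.dist_eq]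
  gcongr with j
  by_cases h : j = l
  · subst h
    simpa [coordAbs, Real.dist_eq] using abs_abs_sub_abs_le_abs_sub (x j) (y j)
  · simp [coordAbs, h]

noncomputable def planeRotation [Fintype ι] {a b : ι} (hab : a ≠ b) (θ : ℝ) :
    EuclideanSpace ℝ ι ≃ₗᵢ[ℝ] EuclideanSpace ℝ ι :=
  LinearIsometry.toLinearIsometryEquiv
    { toFun := fun x => WithLp.toLp 2 fun j =>
        if j = a then Real.cos θ * x a - Real.sin θ * x b
        else if j = b then Real.sin θ * x a + Real.cos θ * x b else x j
      map_add' := fun x y => by ext j; simp only [PiLp.add_apply]; split_ifs <;> ring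
      map_smul' := fun c x => by
        ext j; simp only [PiLp.smul_apply, smul_eq_mul, RingHom.id_apply]; split_ifs <;> ring
      norm_map' := fun x => by
        simp only [LinearMap.coe_mk, AddHom.coe_mk, EuclideanSpace.norm_eq, Real.norm_eq_abs,
          sq_abs]
        congr 1
        rw [← sub_eq_zero, ← Finset.sum_sub_distrib, Fintype.sum_eq_add a b hab]
        · simp only [if_true, if_neg hab.symm]
          linear_combination (x a ^ 2 + x b ^ 2) * Real.sin_sq_add_cos_sq θ
        · rintro j ⟨hja, hjb⟩
          simp [hja, hjb] }
    rfl

lemma planeRotation_apply_right [Fintype ι] {a b : ι} (hab : a ≠ b) (θ : ℝ)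
    (x : EuclideanSpace ℝ ι) :
    planeRotation hab θ x b = Real.sin θ * x a + Real.cos θ * x b := by
  simp [planeRotation, hab.symm]

lemma planeRotation_apply_of_ne [Fintype ι] {a b : ι} (hab : a ≠ b) (θ : ℝ)
    (x : EuclideanSpace ℝ ι) {j : ι} (hja : j ≠ a) (hjb : j ≠ b) :
    planeRotation hab θ x j = x j := by
  simp [planeRotation, hja, hjb]

end Coordinates

lemma exists_measure_le_of_pairwise_inter_subset {α ι : Type*} [MeasurableSpace α]
    [Uncountable ι] {μ : Measure α} [SFinite μ] {s : ι → Set α} {t : Set α}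
    (hs : ∀ i, MeasurableSet (s i)) (ht : MeasurableSet t)
    (hst : Pairwise fun i j => s i ∩ s j ⊆ t) : ∃ i, μ (s i) ≤ μ t := by
  have hcount : {i | 0 < μ (s i \ t)}.Countable :=
    Measure.countable_meas_pos_of_disjoint_iUnion (fun i => (hs i).diff ht)
      fun i j hij => Set.disjoint_left.2 fun x hi hj => hi.2 (hst hij ⟨hi.1, hj.1⟩)
  obtain ⟨i, hi⟩ : ∃ i, ¬ 0 < μ (s i \ t) := by
    by_contra! h
    exact not_countable (Set.countable_univ_iff.mp (hcount.mono fun i _ => h i))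
  exact ⟨i, measure_mono_ae (ae_le_set.2 (not_lt.mp hi |>.antisymm bot_le))⟩

lemma measurableSet_coord_nonneg {ι : Type*} [Fintype ι] (l : ι) :
    MeasurableSet {x : EuclideanSpace ℝ ι | 0 ≤ x l} :=
  (isClosed_le continuous_const (by fun_prop)).measurableSet

section Halfspace

variable {ι : Type*} [Fintype ι] [DecidableEq ι] {l : ι} {μ : Measure (EuclideanSpace ℝ ι)}

lemma map_coordAbs_le (hμ : μ.map (coordReflection l) = μ) :
    μ.map (coordAbs l) ≤ 2 • μ.restrict {x | 0 ≤ x l} := by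
  set P := {x : EuclideanSpace ℝ ι | 0 ≤ x l}
  refine Measure.le_iff.2 fun s hs => ?_
  have hsP := hs.inter (measurableSet_coord_nonneg l)
  have hsub : coordAbs l ⁻¹' s ⊆ (s ∩ P) ∪ coordReflection l ⁻¹' (s ∩ P) := by
    intro x hx
    rcases le_total 0 (x l) with h | h
    · rw [Set.mem_preimage, coordAbs_of_nonneg h] at hx
      exact .inl ⟨hx, h⟩
    · rw [Set.mem_preimage, coordAbs_of_nonpos h] at hx
      exact .inr ⟨hx, by simpa [P, coordReflection_apply] using h⟩
  calc μ.map (coordAbs l) s = μ (coordAbs l ⁻¹' s) :=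
        Measure.map_apply (continuous_coordAbs l).measurable hs
    _ ≤ μ (s ∩ P) + μ (coordReflection l ⁻¹' (s ∩ P)) :=
        (measure_mono hsub).trans (measure_union_le _ _)
    _ = (2 • μ.restrict P) s := by
        rw [← Measure.map_apply (coordReflection l).continuous.measurable hsP, hμ,
          Measure.smul_apply, Measure.restrict_apply hs, two_nsmul]

lemma measure_coord_nonneg_eq_half [IsProbabilityMeasure μ]
    (hμ : μ.map (coordReflection l) = μ) (h0 : μ {x | x l = 0} = 0) :
    μ {x | 0 ≤ x l} = 2⁻¹ := by
  set P := {x : EuclideanSpace ℝ ι | 0 ≤ x l}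
  set Q := {x : EuclideanSpace ℝ ι | x l ≤ 0}
  have hQ : coordReflection l ⁻¹' P = Q := by
    ext x; simp [P, Q, coordReflection_apply]
  have hμQ : μ Q = μ P := by
    rw [← hQ, ← Measure.map_apply (coordReflection l).continuous.measurable
      (measurableSet_coord_nonneg l), hμ]
  have hPQ : P ∪ Q = Set.univ := Set.eq_univ_of_forall fun x => le_total 0 (x l)
  have hPQ' : P ∩ Q = {x | x l = 0} := by
    ext x; simp [P, Q, le_antisymm_iff, and_comm]
  have hsum := measure_union_add_inter (μ := μ) P (hQ ▸ (measurableSet_coord_nonneg l).preimage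
    (coordReflection l).continuous.measurable)
  rw [hPQ, hPQ', measure_univ, h0, add_zero, hμQ, ← mul_two] at hsum
  exact ENNReal.eq_inv_of_mul_eq_one_left hsum.symm

end Halfspace

section CoordinateSubspace

variable {N : ℕ}

def coordVanishing (N k : ℕ) : Set (EuclideanSpace ℝ (Fin N)) :=
  {x | ∀ j : Fin N, k ≤ (j : ℕ) → x j = 0}

lemma measurableSet_coordVanishing (k : ℕ) : MeasurableSet (coordVanishing N k) := by
  simp only [coordVanishing, Set.ofPred_forall]
  exact MeasurableSet.iInter fun j => MeasurableSet.iInter fun _ =>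
    (isClosed_eq (by fun_prop) continuous_const).measurableSet

lemma inter_preimage_planeRotation_subset {a b : Fin N} (hab : a ≠ b) (hb : (b : ℕ) = a + 1)
    {θ θ' : ℝ} (hθ : θ ∈ Set.Ioo 0 Real.pi) (hθ' : θ' ∈ Set.Ioo 0 Real.pi) (hne : θ ≠ θ') :
    planeRotation hab θ ⁻¹' coordVanishing N b ∩ planeRotation hab θ' ⁻¹' coordVanishing N b ⊆
      coordVanishing N a := by
  rintro x ⟨hx, hx'⟩ j hj
  have e := hx b le_rfl
  have e' := hx' b le_rfl
  rw [planeRotation_apply_right] at e e'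
  have hsin : Real.sin (θ - θ') ≠ 0 := by
    rw [Ne, Real.sin_eq_zero_iff_of_lt_of_lt (by linarith [hθ.1, hθ'.2])
      (by linarith [hθ.2, hθ'.1]), sub_eq_zero]
    exact hne
  have ha : x a = 0 := by
    refine (mul_eq_zero.1 ?_).resolve_right hsin
    rw [Real.sin_sub]
    linear_combination Real.cos θ' * e - Real.cos θ * e'
  have hb' : x b = 0 := by
    refine (mul_eq_zero.1 ?_).resolve_right hsin
    rw [Real.sin_sub]
    linear_combination Real.sin θ * e' - Real.sin θ' * e
  rcases eq_or_ne j a with rfl | hja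
  · exact ha
  rcases eq_or_ne j b with rfl | hjb
  · exact hb'
  rw [← planeRotation_apply_of_ne hab θ x hja hjb]
  exact hx j (by have := Fin.val_ne_of_ne hja; have := Fin.val_ne_of_ne hjb; omega)

lemma measure_coordVanishing_succ_le {μ : Measure (EuclideanSpace ℝ (Fin N))}
    [SFinite μ] (hinv : ∀ O : EuclideanSpace ℝ (Fin N) ≃ₗᵢ[ℝ] EuclideanSpace ℝ (Fin N),
      μ.map O = μ) {k : ℕ} (hk : k + 1 < N) :
    μ (coordVanishing N (k + 1)) ≤ μ (coordVanishing N k) := by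
  have hab : (⟨k, by omega⟩ : Fin N) ≠ ⟨k + 1, hk⟩ := by simp
  have : Uncountable (Set.Ioo 0 Real.pi) := by
    rw [← not_countable_iff, Set.countable_coe_iff, Cardinal.Real.Ioo_countable_iff, not_le]
    exact Real.pi_pos
  obtain ⟨θ, hθ⟩ := exists_measure_le_of_pairwise_inter_subset (μ := μ)
    (s := fun θ : Set.Ioo 0 Real.pi => planeRotation hab θ ⁻¹' coordVanishing N (k + 1))
    (fun θ => (measurableSet_coordVanishing _).preimage (planeRotation hab θ).continuous.measurable)
    (measurableSet_coordVanishing k)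
    fun θ θ' hne => inter_preimage_planeRotation_subset hab rfl θ.2 θ'.2 (Subtype.coe_ne_coe.2 hne)
  rwa [← Measure.map_apply (planeRotation hab θ).continuous.measurable
    (measurableSet_coordVanishing _), hinv] at hθ

lemma measure_coordVanishing_eq_zero {μ : Measure (EuclideanSpace ℝ (Fin N))}
    [SFinite μ] (hinv : ∀ O : EuclideanSpace ℝ (Fin N) ≃ₗᵢ[ℝ] EuclideanSpace ℝ (Fin N),
      μ.map O = μ) (h0 : μ {0} = 0) : ∀ k < N, μ (coordVanishing N k) = 0
  | 0, _ => measure_mono_null (fun x hx => by ext j; exact hx j j.val.zero_le) h0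
  | k + 1, hk => le_antisymm ((measure_coordVanishing_succ_le hinv hk).trans_eq
      (measure_coordVanishing_eq_zero hinv h0 k (by omega))) bot_le

lemma measure_coord_eq_zero {μ : Measure (EuclideanSpace ℝ (Fin N))} [SFinite μ]
    (hinv : ∀ O : EuclideanSpace ℝ (Fin N) ≃ₗᵢ[ℝ] EuclideanSpace ℝ (Fin N), μ.map O = μ)
    (h0 : μ {0} = 0) {l : Fin N} (hl : N = l + 1) : μ {x | x l = 0} = 0 := by
  convert measure_coordVanishing_eq_zero hinv h0 l l.isLt using 2
  ext x
  refine ⟨fun hx j hj => ?_, fun hx => hx l le_rfl⟩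
  rwa [show j = l from Fin.ext (by have := j.isLt; omega)]

end CoordinateSubspace

lemma hemiMeasure_eq_two_nsmul_restrict {N : ℕ} (hN : 2 ≤ N) {R : ℝ} (hR : 0 < R)
    {σ : Measure (EuclideanSpace ℝ (Fin N))} [IsProbabilityMeasure σ]
    (hsupp : σ (Metric.sphere 0 R)ᶜ = 0)
    (hinv : ∀ O : EuclideanSpace ℝ (Fin N) ≃ₗᵢ[ℝ] EuclideanSpace ℝ (Fin N), σ.map O = σ) :
    hemiMeasure N hN R σ = 2 • σ.restrict {x | 0 ≤ x ⟨N - 1, by omega⟩} := by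
  set l : Fin N := ⟨N - 1, by omega⟩
  have hequator : σ {x | x l = 0} = 0 :=
    measure_coord_eq_zero hinv (measure_mono_null (by simp [hR.ne]) hsupp) (by simp [l]; omega)
  have hhemi : σ.restrict (hemiset N hN R) = σ.restrict {x | 0 ≤ x l} := by
    refine Measure.restrict_congr_set ?_
    filter_upwards [measure_eq_zero_iff_ae_notMem.1 hsupp] with x hx
    rw [Set.notMem_compl_iff, mem_sphere_zero_iff_norm] at hx
    show (x ∈ hemiset N hN R) = (x ∈ {x : EuclideanSpace ℝ (Fin N) | 0 ≤ x l})
    simp [hemiset, hx, l]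
  rw [hemiMeasure, hhemi, ← Measure.restrict_apply_univ, hhemi, Measure.restrict_apply_univ,
    measure_coord_nonneg_eq_half (hinv (coordReflection l)) hequator, inv_inv,
    ofNat_smul_eq_nsmul]

lemma measure_prod_dist_le_le_map_prod {X : Type*} [PseudoMetricSpace X] [MeasurableSpace X]
    [BorelSpace X] [SecondCountableTopology X] (μ : Measure X) [SFinite μ]
    {f : X → X} (hf : Continuous f) (hdist : ∀ x y, dist (f x) (f y) ≤ dist x y) (d : ℝ) :
    μ.prod μ {q | dist q.1 q.2 ≤ d} ≤ (μ.map f).prod (μ.map f) {q | dist q.1 q.2 ≤ d} := by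
  rw [Measure.map_prod_map _ _ hf.measurable hf.measurable,
    Measure.map_apply (hf.measurable.prodMap hf.measurable)
      (isClosed_le continuous_dist continuous_const).measurableSet]
  exact measure_mono fun q hq => (hdist q.1 q.2).trans hq

theorem stmt_11_general (N : ℕ) (hN : 2 ≤ N) (R : ℝ) (hR : 0 < R)
    (σ : Measure (EuclideanSpace ℝ (Fin N))) [IsProbabilityMeasure σ]
    (hsupp : σ (Metric.sphere (0 : EuclideanSpace ℝ (Fin N)) R)ᶜ = 0)
    (hinv : ∀ O : EuclideanSpace ℝ (Fin N) ≃ₗᵢ[ℝ] EuclideanSpace ℝ (Fin N),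
      Measure.map O σ = σ) (d : ℝ) :
    ((σ.prod σ)
        {q : EuclideanSpace ℝ (Fin N) × EuclideanSpace ℝ (Fin N) | dist q.1 q.2 ≤ d}).toReal
      ≤ (((hemiMeasure N hN R σ).prod (hemiMeasure N hN R σ))
        {q : EuclideanSpace ℝ (Fin N) × EuclideanSpace ℝ (Fin N) | dist q.1 q.2 ≤ d}).toReal := by
  set l : Fin N := ⟨N - 1, by omega⟩
  have hhemi := hemiMeasure_eq_two_nsmul_restrict hN hR hsupp hinv
  have hfold : σ.map (coordAbs l) ≤ hemiMeasure N hN R σ :=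
    hhemi ▸ map_coordAbs_le (hinv (coordReflection l))
  rw [hhemi] at hfold ⊢
  calc _ ≤ (((σ.map (coordAbs l)).prod (σ.map (coordAbs l))) {q | dist q.1 q.2 ≤ d}).toReal :=
        ENNReal.toReal_mono (measure_ne_top _ _) <|
          measure_prod_dist_le_le_map_prod σ (continuous_coordAbs l) (dist_coordAbs_le l) d
    _ ≤ _ := ENNReal.toReal_mono (measure_ne_top _ _) (Measure.prod_mono hfold hfold _)

theorem stmt_11 (N : ℕ) (hN : 2 ≤ N) (R : ℝ) (hR : 0 < R)
    (σ : Measure (EuclideanSpace ℝ (Fin N))) [IsProbabilityMeasure σ]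
    (hsupp : σ (Metric.sphere (0 : EuclideanSpace ℝ (Fin N)) R)ᶜ = 0)
    (hinv : ∀ O : EuclideanSpace ℝ (Fin N) ≃ₗᵢ[ℝ] EuclideanSpace ℝ (Fin N),
      Measure.map O σ = σ)
    (d : ℝ) (hd0 : 0 ≤ d) (hd : d ≤ Real.sqrt 2 * R) :
    ((σ.prod σ)
        {q : EuclideanSpace ℝ (Fin N) × EuclideanSpace ℝ (Fin N) | dist q.1 q.2 ≤ d}).toReal
      ≤ (((hemiMeasure N hN R σ).prod (hemiMeasure N hN R σ))
        {q : EuclideanSpace ℝ (Fin N) × EuclideanSpace ℝ (Fin N) | dist q.1 q.2 ≤ d}).toReal :=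
  stmt_11_general N hN R hR σ hsupp hinv d
end
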